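/- arXiv:1512.06958 — 4 statements merged into one kernel-verified Lean document; each statement's English description precedes it below -/
import Mathlib

section
/- Let Δ be a flag simplicial complex of dimension d-1, and let σ_1 and σ_2 be two (d-2)-dimensional faces (ridges) that both lie in the same facet σ of Δ. Then the links lk_Δ σ_1 and lk_Δ σ_2 have no common vertex. -/
open Finset

/-- An abstract simplicial complex on vertex type `V`, given by a finite,
downward-closed family of finite faces containing the empty face. -/
structure SC (V : Type*) [DecidableEq V] where
  faces : Finset (Finset V)
  empty_mem : ∅ ∈ faces
  down_closed : ∀ ⦃σ τ : Finset V⦄, σ ∈ faces → τ ⊆ σ → τ ∈ faces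

namespace SC

variable {V : Type*} [DecidableEq V]

/-- The vertex set of a complex. -/
def vertexSet (Δ : SC V) : Finset V := Δ.faces.sup id

/-- `fNum Δ i` is the number of `i`-dimensional faces (faces of cardinality `i+1`). -/
def fNum (Δ : SC V) (i : ℕ) : ℕ := (Δ.faces.filter fun σ => σ.card = i + 1).card

/-- A complex is flag if it is the clique complex of its graph, i.e. every set of
vertices which is pairwise joined by edges is a face (equivalently, all minimal
non-faces have cardinality two). -/
def IsFlag (Δ : SC V) : Prop :=
  ∀ σ : Finset V, (∀ u ∈ σ, ∀ v ∈ σ, ({u, v} : Finset V) ∈ Δ.faces) → σ ∈ Δ.faces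

/-- The restriction `Δ[W]` of `Δ` to a set `W` of vertices. -/
def restrict (Δ : SC V) (W : Finset V) : SC V where
  faces := Δ.faces.filter fun σ => σ ⊆ W
  empty_mem := by simp [Δ.empty_mem]
  down_closed := by
    intro σ τ hσ hτ
    simp only [mem_filter] at hσ ⊢
    exact ⟨Δ.down_closed hσ.1 hτ, hτ.trans hσ.2⟩

/-- The link of a face `σ` in `Δ`. -/
def link (Δ : SC V) (σ : Finset V) : SC V where
  faces := insert ∅ (Δ.faces.filter fun τ => Disjoint τ σ ∧ τ ∪ σ ∈ Δ.faces)
  empty_mem := mem_insert_self _ _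
  down_closed := by
    intro τ ρ hτ hρ
    rcases mem_insert.1 hτ with h | h
    · subst h
      simp [Finset.subset_empty.1 hρ]
    · simp only [mem_filter] at h
      refine mem_insert.2 (Or.inr ?_)
      simp only [mem_filter]
      exact ⟨Δ.down_closed h.1 hρ, h.2.1.mono_left hρ,
        Δ.down_closed h.2.2 (Finset.union_subset_union hρ Finset.Subset.rfl)⟩

/-- A facet is a maximal face. -/
def IsFacet (Δ : SC V) (σ : Finset V) : Prop :=
  σ ∈ Δ.faces ∧ ∀ τ ∈ Δ.faces, σ ⊆ τ → σ = τ

/-- `Δ` is pure of dimension `D`: all faces have dimension at most `D` and all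
facets have dimension exactly `D`. -/
def Pure (Δ : SC V) (D : ℕ) : Prop :=
  (∀ σ ∈ Δ.faces, σ.card ≤ D + 1) ∧ (∃ σ ∈ Δ.faces, σ.card = D + 1) ∧
    ∀ σ : Finset V, Δ.IsFacet σ → σ.card = D + 1

/-- The graph (1-skeleton) of a complex. -/
def graph (Δ : SC V) : SimpleGraph V where
  Adj u v := u ≠ v ∧ ({u, v} : Finset V) ∈ Δ.faces
  symm := by
    constructor
    intro u v h
    exact ⟨h.1.symm, by rw [Finset.pair_comm]; exact h.2⟩
  loopless := by constructor; intro u h; exact h.1 rfl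

/-- A complex is connected if its vertex set is nonempty and any two vertices are
joined by a path in its graph. -/
def Connected (Δ : SC V) : Prop :=
  Δ.vertexSet.Nonempty ∧ ∀ u ∈ Δ.vertexSet, ∀ v ∈ Δ.vertexSet, Δ.graph.Reachable u v

/-- The reduced Euler characteristic `χ̃(Δ) = -1 + f₀ - f₁ + f₂ - ⋯`. -/
def redChar (Δ : SC V) : ℤ := -∑ σ ∈ Δ.faces, (-1 : ℤ) ^ σ.card

/-- `Δ` is an Eulerian complex of dimension `D`: it is pure of dimension `D` and the
reduced Euler characteristic of the link of every face `σ` (including `σ = ∅`)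
equals `(-1) ^ (dim lk σ)`, written multiplicatively to avoid signed dimensions. -/
def IsEulerian (Δ : SC V) (D : ℕ) : Prop :=
  Δ.Pure D ∧ ∀ σ ∈ Δ.faces, (Δ.link σ).redChar * (-1) ^ σ.card = (-1) ^ D

/-- A weak pseudomanifold of dimension `D`: pure and every ridge ((D-1)-face) lies
in exactly two facets. -/
def IsWeakPseudo (Δ : SC V) (D : ℕ) : Prop :=
  Δ.Pure D ∧ ∀ σ ∈ Δ.faces, σ.card = D →
    (Δ.faces.filter fun τ => σ ⊆ τ ∧ τ.card = D + 1).card = 2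

/-- A normal pseudomanifold of dimension `D`: a connected weak pseudomanifold all of
whose links of faces of dimension `≤ D - 2` are connected. -/
def IsNormalPseudo (Δ : SC V) (D : ℕ) : Prop :=
  Δ.IsWeakPseudo D ∧ Δ.Connected ∧
    ∀ σ ∈ Δ.faces, σ.card + 1 ≤ D → (Δ.link σ).Connected

/-- The join of two complexes (on disjoint vertex sets). -/
def join (Δ Γ : SC V) : SC V where
  faces := (Δ.faces ×ˢ Γ.faces).image fun p => p.1 ∪ p.2
  empty_mem := Finset.mem_image.2 ⟨(∅, ∅),
    Finset.mem_product.2 ⟨Δ.empty_mem, Γ.empty_mem⟩, Finset.union_empty ∅⟩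
  down_closed := by
    intro σ τ hσ hτ
    rw [Finset.mem_image] at hσ ⊢
    obtain ⟨⟨a, b⟩, hab, rfl⟩ := hσ
    rw [Finset.mem_product] at hab
    refine ⟨(τ ∩ a, τ ∩ b), Finset.mem_product.2
      ⟨Δ.down_closed hab.1 Finset.inter_subset_right,
       Γ.down_closed hab.2 Finset.inter_subset_right⟩, ?_⟩
    rw [← Finset.inter_union_distrib_left]
    exact Finset.inter_eq_left.2 hτ

/-- The trivial complex, whose only face is the empty face (identity for join). -/
def trivialSC : SC V where
  faces := {∅}
  empty_mem := Finset.mem_singleton_self ∅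
  down_closed := by
    intro σ τ hσ hτ
    simp only [Finset.mem_singleton] at hσ ⊢
    subst hσ
    exact Finset.subset_empty.1 hτ

/-- The join of a finite family of complexes. -/
def bigJoin : {k : ℕ} → (Fin k → SC V) → SC V
  | 0, _ => trivialSC
  | _ + 1, C => (C 0).join (bigJoin fun i => C i.succ)

/-- `Δ` is a cycle (circle) with `n` vertices: a connected, 1-dimensional complex
all of whose vertices have exactly two neighbours. -/
def IsCycle (Δ : SC V) (n : ℕ) : Prop :=
  Δ.vertexSet.card = n ∧ (∀ σ ∈ Δ.faces, σ.card ≤ 2) ∧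
    (∀ v ∈ Δ.vertexSet, (Δ.link {v}).vertexSet.card = 2) ∧ Δ.Connected

/-- `Δ` is the boundary complex of the `d`-dimensional cross-polytope: its vertices
come in `d` antipodal pairs and the faces are exactly the sets containing at most
one vertex of each pair. -/
def IsCrossPolytopeBoundary (Δ : SC V) (d : ℕ) : Prop :=
  ∃ x y : Fin d → V, Function.Injective x ∧ Function.Injective y ∧
    (∀ i j, x i ≠ y j) ∧
    ∀ σ : Finset V, σ ∈ Δ.faces ↔
      ((∀ v ∈ σ, ∃ i, v = x i ∨ v = y i) ∧ ∀ i, ¬(x i ∈ σ ∧ y i ∈ σ))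

/-- `Δ` is a simplicial 2-sphere: a connected weak 2-pseudomanifold whose vertex
links are circles and whose reduced Euler characteristic is 1. -/
def IsSphere2 (Δ : SC V) : Prop :=
  Δ.Connected ∧ Δ.IsWeakPseudo 2 ∧
    (∀ v ∈ Δ.vertexSet, ∃ n, 3 ≤ n ∧ (Δ.link {v}).IsCycle n) ∧ Δ.redChar = 1

/-- `Δ` is a (closed) simplicial 3-manifold: connected, pure of dimension 3, and the
link of every vertex is a simplicial 2-sphere. -/
def Is3Manifold (Δ : SC V) : Prop :=
  Δ.Connected ∧ Δ.Pure 3 ∧ ∀ v ∈ Δ.vertexSet, (Δ.link {v}).IsSphere2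

/-- `Δ` is a disjoint union of cycles, each of length at least 4: it is
1-dimensional, 2-regular and its graph has no triangles. -/
def IsDisjointUnionOfCyclesGe4 (Δ : SC V) : Prop :=
  (∀ σ ∈ Δ.faces, σ.card ≤ 2) ∧
    (∀ v ∈ Δ.vertexSet, (Δ.link {v}).vertexSet.card = 2) ∧
    ∀ u v w : V, ({u, v} : Finset V) ∈ Δ.faces → ({v, w} : Finset V) ∈ Δ.faces →
      ({u, w} : Finset V) ∈ Δ.faces → u = v ∨ v = w ∨ u = w

end SC

theorem Finset.union_eq_of_ne_of_card_eq_sub_one {α : Type*} [DecidableEq α]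
    {s t u : Finset α} (ht : t ⊆ s) (hu : u ⊆ s) (htc : t.card = s.card - 1)
    (huc : u.card = s.card - 1) (hne : t ≠ u) : t ∪ u = s := by
  have hinter : (t ∩ u).card < t.card := by
    refine card_lt_card (ssubset_iff_subset_ne.2 ⟨inter_subset_left, fun h => hne ?_⟩)
    exact eq_of_subset_of_card_le (inter_eq_left.1 h) (by omega)
  have := card_union_add_card_inter t u
  exact eq_of_subset_of_card_le (union_subset ht hu) (by omega)

namespace SC

variable {V : Type*} [DecidableEq V] {Δ : SC V}

theorem mem_vertexSet_link {τ : Finset V} {v : V} :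
    v ∈ (Δ.link τ).vertexSet ↔ v ∉ τ ∧ insert v τ ∈ Δ.faces := by
  simp only [vertexSet, mem_sup, id]
  constructor
  · rintro ⟨ρ, hρ, hvρ⟩
    have hv : {v} ∈ (Δ.link τ).faces := (Δ.link τ).down_closed hρ (singleton_subset_iff.2 hvρ)
    simp only [link, mem_insert, singleton_ne_empty, false_or, mem_filter,
      disjoint_singleton_left, ← insert_eq] at hv
    exact hv.2
  · rintro ⟨hvτ, hface⟩
    refine ⟨{v}, mem_insert_of_mem (mem_filter.2 ⟨?_, ?_, ?_⟩), mem_singleton_self v⟩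
    · exact Δ.down_closed hface (singleton_subset_iff.2 (mem_insert_self v τ))
    · exact disjoint_singleton_left.2 hvτ
    · rwa [← insert_eq]

theorem pair_mem_faces {ρ : Finset V} {a b : V} (hρ : ρ ∈ Δ.faces) (ha : a ∈ ρ) (hb : b ∈ ρ) :
    ({a, b} : Finset V) ∈ Δ.faces :=
  Δ.down_closed hρ (insert_subset ha (singleton_subset_iff.2 hb))

/-- Every pair of vertices of `insert v (s ∪ t)` lies in one of the three given faces. -/
theorem IsFlag.insert_union_mem_faces (hflag : Δ.IsFlag) {s t : Finset V} {v : V}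
    (hs : insert v s ∈ Δ.faces) (ht : insert v t ∈ Δ.faces) (hst : s ∪ t ∈ Δ.faces) :
    insert v (s ∪ t) ∈ Δ.faces := by
  have hcone : ∀ c ∈ insert v (s ∪ t), ({v, c} : Finset V) ∈ Δ.faces := by
    intro c hc
    rcases mem_union.1 (insert_union_distrib v s t ▸ hc) with hc | hc
    · exact pair_mem_faces hs (mem_insert_self v s) hc
    · exact pair_mem_faces ht (mem_insert_self v t) hc
  refine hflag _ fun a ha b hb => ?_
  by_cases hav : a = v
  · exact hav ▸ hcone b hb
  by_cases hbv : b = v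
  · exact pair_comm a b ▸ hbv ▸ hcone a ha
  exact pair_mem_faces hst (mem_of_mem_insert_of_ne ha hav) (mem_of_mem_insert_of_ne hb hbv)

end SC

theorem statement_3_general {V : Type*} [DecidableEq V] (Δ : SC V) (d : ℕ)
    (hflag : Δ.IsFlag)
    (σ σ₁ σ₂ : Finset V) (hσ : Δ.IsFacet σ) (hσcard : σ.card = d)
    (h1 : σ₁ ⊆ σ) (h2 : σ₂ ⊆ σ) (hc1 : σ₁.card = d - 1) (hc2 : σ₂.card = d - 1)
    (hne : σ₁ ≠ σ₂) :
    Disjoint (Δ.link σ₁).vertexSet (Δ.link σ₂).vertexSet := by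
  refine disjoint_left.2 fun v hv₁ hv₂ => ?_
  obtain ⟨hvσ₁, hface₁⟩ := SC.mem_vertexSet_link.1 hv₁
  obtain ⟨hvσ₂, hface₂⟩ := SC.mem_vertexSet_link.1 hv₂
  have hunion : σ₁ ∪ σ₂ = σ :=
    union_eq_of_ne_of_card_eq_sub_one h1 h2 (hσcard ▸ hc1) (hσcard ▸ hc2) hne
  have hvσ : v ∉ σ := hunion ▸ notMem_union.2 ⟨hvσ₁, hvσ₂⟩
  have hcone : insert v σ ∈ Δ.faces :=
    hunion ▸ hflag.insert_union_mem_faces hface₁ hface₂ (hunion ▸ hσ.1)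
  exact hvσ (hσ.2 _ hcone (subset_insert v σ) ▸ mem_insert_self v σ)

/-- In a flag `(d-1)`-dimensional complex, two distinct ridges lying in
a common facet have disjoint links. -/
theorem statement_3 {V : Type*} [DecidableEq V] (Δ : SC V) (d : ℕ)
    (hflag : Δ.IsFlag) (hdim : ∀ τ ∈ Δ.faces, τ.card ≤ d)
    (σ σ₁ σ₂ : Finset V) (hσ : Δ.IsFacet σ) (hσcard : σ.card = d)
    (h1 : σ₁ ⊆ σ) (h2 : σ₂ ⊆ σ) (hc1 : σ₁.card = d - 1) (hc2 : σ₂.card = d - 1)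
    (hne : σ₁ ≠ σ₂) :
    Disjoint (Δ.link σ₁).vertexSet (Δ.link σ₂).vertexSet :=
  statement_3_general Δ d hflag σ σ₁ σ₂ hσ hσcard h1 h2 hc1 hc2 hne
end

section
/- Let Δ be a flag simplicial complex and let σ = τ_1 ∪ τ_2 be a facet of Δ with τ_1 and τ_2 disjoint and nonempty. Then f_0(lk_Δ τ_1) + f_0(lk_Δ τ_2) ≤ f_0(Δ), where f_0 denotes the number of vertices. -/
open Finset

namespace SC

variable {V : Type*} [DecidableEq V]

lemma mem_vertexSet {Δ : SC V} {v : V} : v ∈ Δ.vertexSet ↔ ({v} : Finset V) ∈ Δ.faces :=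
  ⟨fun h => by
    obtain ⟨σ, hσ, hv⟩ := Finset.mem_sup.1 h
    exact Δ.down_closed hσ (singleton_subset_iff.2 hv),
  fun h => Finset.mem_sup.2 ⟨{v}, h, mem_singleton_self v⟩⟩

lemma mem_link_vertexSet {Δ : SC V} {τ : Finset V} {v : V} :
    v ∈ (Δ.link τ).vertexSet ↔ v ∉ τ ∧ insert v τ ∈ Δ.faces := by
  simp only [mem_vertexSet, link, mem_insert, singleton_ne_empty, false_or, mem_filter,
    disjoint_singleton_left, ← insert_eq]
  exact ⟨fun h => h.2, fun h => ⟨Δ.down_closed h.2 (by simp), h⟩⟩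

lemma link_vertexSet_subset (Δ : SC V) (τ : Finset V) : (Δ.link τ).vertexSet ⊆ Δ.vertexSet :=
  fun _ hv => mem_vertexSet.2 <| Δ.down_closed (mem_link_vertexSet.1 hv).2 (by simp)

lemma pair_mem_faces_s5 (Δ : SC V) {ρ : Finset V} (hρ : ρ ∈ Δ.faces) {u w : V}
    (hu : u ∈ ρ) (hw : w ∈ ρ) : ({u, w} : Finset V) ∈ Δ.faces :=
  Δ.down_closed hρ (insert_subset hu (singleton_subset_iff.2 hw))

lemma IsFlag.union_mem_faces {Δ : SC V} (hflag : Δ.IsFlag) {σ τ : Finset V}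
    (hσ : σ ∈ Δ.faces) (hτ : τ ∈ Δ.faces)
    (hpair : ∀ u ∈ σ, ∀ w ∈ τ, ({u, w} : Finset V) ∈ Δ.faces) : σ ∪ τ ∈ Δ.faces := by
  refine hflag _ fun u hu w hw => ?_
  rcases mem_union.1 hu with hu | hu <;> rcases mem_union.1 hw with hw | hw
  · exact Δ.pair_mem_faces_s5 hσ hu hw
  · exact hpair u hu w hw
  · exact pair_comm w u ▸ hpair w hw u hu
  · exact Δ.pair_mem_faces_s5 hτ hu hw

lemma IsFacet.mem_of_insert_mem_faces {Δ : SC V} {σ : Finset V} (hσ : Δ.IsFacet σ) {v : V}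
    (hv : insert v σ ∈ Δ.faces) : v ∈ σ :=
  (hσ.2 _ hv (subset_insert v σ)).symm ▸ mem_insert_self v σ

/-- A common vertex of both links is joined to all of `τ₁ ∪ τ₂`, so flagness lets it extend
the facet `τ₁ ∪ τ₂`. -/
lemma IsFlag.disjoint_link_vertexSet {Δ : SC V} (hflag : Δ.IsFlag) {τ₁ τ₂ : Finset V}
    (hfacet : Δ.IsFacet (τ₁ ∪ τ₂)) :
    Disjoint (Δ.link τ₁).vertexSet (Δ.link τ₂).vertexSet := by
  refine disjoint_left.2 fun v hv₁ hv₂ => ?_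
  obtain ⟨hvτ₁, hf₁⟩ := mem_link_vertexSet.1 hv₁
  obtain ⟨hvτ₂, hf₂⟩ := mem_link_vertexSet.1 hv₂
  have hpair : ∀ u ∈ ({v} : Finset V), ∀ w ∈ τ₁ ∪ τ₂, ({u, w} : Finset V) ∈ Δ.faces := by
    intro u hu w hw
    rw [mem_singleton.1 hu]
    rcases mem_union.1 hw with hw | hw
    · exact Δ.pair_mem_faces_s5 hf₁ (mem_insert_self v τ₁) (mem_insert_of_mem hw)
    · exact Δ.pair_mem_faces_s5 hf₂ (mem_insert_self v τ₂) (mem_insert_of_mem hw)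
  have hext : insert v (τ₁ ∪ τ₂) ∈ Δ.faces :=
    hflag.union_mem_faces (mem_vertexSet.1 (Δ.link_vertexSet_subset τ₁ hv₁)) hfacet.1 hpair
  rcases mem_union.1 (hfacet.mem_of_insert_mem_faces hext) with h | h
  · exact hvτ₁ h
  · exact hvτ₂ h

end SC

theorem statement_5_general {V : Type*} [DecidableEq V] (Δ : SC V) (hflag : Δ.IsFlag)
    (τ₁ τ₂ : Finset V)
    (hfacet : Δ.IsFacet (τ₁ ∪ τ₂)) :
    (Δ.link τ₁).vertexSet.card + (Δ.link τ₂).vertexSet.card ≤ Δ.vertexSet.card := by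
  rw [← card_union_of_disjoint (hflag.disjoint_link_vertexSet hfacet)]
  exact card_le_card (union_subset (Δ.link_vertexSet_subset τ₁) (Δ.link_vertexSet_subset τ₂))

/-- In a flag complex, if a facet `σ` is partitioned into two nonempty
faces `τ₁, τ₂`, then `f₀(lk τ₁) + f₀(lk τ₂) ≤ f₀(Δ)`. -/
theorem statement_5 {V : Type*} [DecidableEq V] (Δ : SC V) (hflag : Δ.IsFlag)
    (τ₁ τ₂ : Finset V) (hdisj : Disjoint τ₁ τ₂) (h1 : τ₁.Nonempty) (h2 : τ₂.Nonempty)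
    (hfacet : Δ.IsFacet (τ₁ ∪ τ₂)) :
    (Δ.link τ₁).vertexSet.card + (Δ.link τ₂).vertexSet.card ≤ Δ.vertexSet.card :=
  statement_5_general Δ hflag τ₁ τ₂ hfacet
end

section
/- Let Δ be a flag weak 3-pseudomanifold on n vertices and let σ = {v_1, v_2, v_3, v_4} be a facet of Δ. Then f_0(lk_Δ v_1) + f_0(lk_Δ v_2) + f_0(lk_Δ v_3) + f_0(lk_Δ v_4) ≤ 2n + 8. -/
open Finset

/-!
Count the edges between the facet `σ` and the vertices of `Δ`: the left-hand side is the number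
of pairs `(v, u)` with `v ∈ σ` adjacent to `u`. By flagness and maximality of `σ`, no vertex is
adjacent to all of `σ`, so every vertex sees at most three vertices of `σ`. A vertex `u ∉ σ`
seeing exactly three of them spans, again by flagness, a facet `ρ ∪ {u}` through the ridge
`ρ ⊆ σ`; since `ρ` lies in only two facets, `σ` and `ρ ∪ {u}`, distinct such `u` give distinct
ridges, so there are at most four of them. Hence the count is at most
`4 * 3 + 2 * (n - 4) + 4 = 2n + 8`.
-/

namespace SC

variable {V : Type*} [DecidableEq V] {Δ : SC V} {σ τ : Finset V} {u v : V} {D : ℕ}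

instance (Δ : SC V) : DecidableRel Δ.graph.Adj :=
  fun u v => inferInstanceAs (Decidable (u ≠ v ∧ ({u, v} : Finset V) ∈ Δ.faces))

theorem graph_adj : Δ.graph.Adj u v ↔ u ≠ v ∧ ({u, v} : Finset V) ∈ Δ.faces := Iff.rfl

theorem mem_vertexSet_s7 : u ∈ Δ.vertexSet ↔ {u} ∈ Δ.faces := by
  simp only [vertexSet, mem_sup, id]
  exact ⟨fun ⟨τ, hτ, hu⟩ => Δ.down_closed hτ (singleton_subset_iff.2 hu),
    fun h => ⟨{u}, h, mem_singleton_self u⟩⟩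

theorem subset_vertexSet_of_mem_faces (hσ : σ ∈ Δ.faces) : σ ⊆ Δ.vertexSet :=
  fun _ hu => mem_vertexSet_s7.2 (Δ.down_closed hσ (singleton_subset_iff.2 hu))

theorem vertexSet_link_singleton (Δ : SC V) (v : V) :
    (Δ.link {v}).vertexSet = Δ.vertexSet.filter (Δ.graph.Adj v) := by
  ext u
  simp only [mem_filter, mem_vertexSet_s7, link, mem_insert, singleton_ne_empty,
    disjoint_singleton, ← insert_eq, graph_adj, pair_comm v u, ne_comm (a := v)]
  tauto

theorem sum_card_vertexSet_link_singleton (Δ : SC V) (σ : Finset V) :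
    ∑ v ∈ σ, #(Δ.link {v}).vertexSet = ∑ u ∈ Δ.vertexSet, #(σ.filter (Δ.graph.Adj u)) := by
  simp_rw [vertexSet_link_singleton]
  refine (sum_card_bipartiteAbove_eq_sum_card_bipartiteBelow (r := Δ.graph.Adj)).trans ?_
  simp only [bipartiteBelow, Δ.graph.adj_comm]

theorem Pure.card_eq_of_isFacet (hΔ : Δ.Pure D) (hσ : Δ.IsFacet σ) : #σ = D + 1 :=
  hΔ.2.2 σ hσ

theorem IsFlag.insert_mem_faces (hΔ : Δ.IsFlag) (hτ : τ ∈ Δ.faces) (hu : {u} ∈ Δ.faces)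
    (hadj : ∀ v ∈ τ, Δ.graph.Adj u v) : insert u τ ∈ Δ.faces := by
  refine hΔ _ fun a ha b hb => ?_
  rcases mem_insert.1 ha with rfl | haτ <;> rcases mem_insert.1 hb with rfl | hbτ
  · simpa using hu
  · exact (hadj b hbτ).2
  · rw [pair_comm]; exact (hadj a haτ).2
  · exact Δ.down_closed hτ (insert_subset haτ (singleton_subset_iff.2 hbτ))

theorem IsFlag.exists_not_adj_of_isFacet (hΔ : Δ.IsFlag) (hσ : Δ.IsFacet σ)
    (hu : u ∈ Δ.vertexSet) : ∃ v ∈ σ, ¬Δ.graph.Adj u v := by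
  by_cases huσ : u ∈ σ
  · exact ⟨u, huσ, Δ.graph.irrefl⟩
  by_contra! hadj
  have hσu := hσ.2 _ (hΔ.insert_mem_faces hσ.1 (mem_vertexSet_s7.1 hu) hadj) (subset_insert u σ)
  exact huσ (hσu ▸ mem_insert_self u σ)

theorem IsFlag.card_filter_adj_lt_of_isFacet (hΔ : Δ.IsFlag) (hσ : Δ.IsFacet σ)
    (hu : u ∈ Δ.vertexSet) : #(σ.filter (Δ.graph.Adj u)) < #σ :=
  card_lt_card (filter_ssubset.2 (hΔ.exists_not_adj_of_isFacet hσ hu))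

theorem IsWeakPseudo.eq_of_insert_mem_faces (hΔ : Δ.IsWeakPseudo D) (hσ : σ ∈ Δ.faces)
    (hσD : #σ = D + 1) (hτσ : τ ⊆ σ) (hτD : #τ = D) {u' : V} (hu : u ∉ σ) (hu' : u' ∉ σ)
    (hτu : insert u τ ∈ Δ.faces) (hτu' : insert u' τ ∈ Δ.faces) : u = u' := by
  by_contra hne
  set cofacets := Δ.faces.filter fun ρ => τ ⊆ ρ ∧ #ρ = D + 1
  have mem_cofacets : ∀ w ∉ σ, insert w τ ∈ Δ.faces → insert w τ ∈ cofacets := fun w hw hτw =>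
    mem_filter.2 ⟨hτw, subset_insert w τ, by rw [card_insert_of_notMem (hw <| hτσ ·), hτD]⟩
  have hsub : {σ, insert u τ, insert u' τ} ⊆ cofacets := by
    simp only [insert_subset_iff, singleton_subset_iff]
    exact ⟨mem_filter.2 ⟨hσ, hτσ, hσD⟩, mem_cofacets u hu hτu, mem_cofacets u' hu' hτu'⟩
  have hσu : ∀ w ∉ σ, σ ≠ insert w τ := fun w hw h => hw (h ▸ mem_insert_self w τ)
  have huu' : insert u τ ≠ insert u' τ := fun h => by
    rcases mem_insert.1 (h ▸ mem_insert_self u τ) with rfl | huτ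
    exacts [hne rfl, hu (hτσ huτ)]
  have hthree := card_le_card hsub
  rw [hΔ.2 τ (Δ.down_closed hσ hτσ) hτD, card_insert_of_notMem (by simp [hσu u hu, hσu u' hu']),
    card_pair huu'] at hthree
  omega

theorem IsWeakPseudo.card_filter_card_filter_adj_eq_le (hΔ : Δ.IsWeakPseudo D)
    (hflag : Δ.IsFlag) (hσ : Δ.IsFacet σ) :
    #((Δ.vertexSet \ σ).filter fun u => #(σ.filter (Δ.graph.Adj u)) = D) ≤ D + 1 := by
  have hσD : #σ = D + 1 := hΔ.1.card_eq_of_isFacet hσ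
  have hspan : ∀ u ∈ Δ.vertexSet, insert u (σ.filter (Δ.graph.Adj u)) ∈ Δ.faces :=
    fun u hu => hflag.insert_mem_faces (Δ.down_closed hσ.1 (filter_subset _ σ))
      (mem_vertexSet_s7.1 hu) fun _ hv => (mem_filter.1 hv).2
  calc _ ≤ #(σ.powersetCard D) := by
        refine card_le_card_of_injOn (fun u => σ.filter (Δ.graph.Adj u)) ?_ ?_
        · intro u hu
          exact mem_powersetCard.2 ⟨filter_subset _ σ, (mem_filter.1 hu).2⟩
        · intro u hu u' hu' h
          simp only [coe_filter, mem_sdiff, Set.mem_ofPred_eq] at hu hu'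
          refine hΔ.eq_of_insert_mem_faces hσ.1 hσD (filter_subset _ σ) hu.2 hu.1.2 hu'.1.2
            (hspan u hu.1.1) ?_
          exact (congrArg (insert u') h) ▸ hspan u' hu'.1.1
    _ = D + 1 := by rw [card_powersetCard, hσD, Nat.choose_succ_self_right]

theorem IsWeakPseudo.sum_card_vertexSet_link_singleton_le (hΔ : Δ.IsWeakPseudo D)
    (hflag : Δ.IsFlag) (hσ : Δ.IsFacet σ) :
    ∑ v ∈ σ, #(Δ.link {v}).vertexSet ≤ (D + 1) ^ 2 + (D - 1) * #(Δ.vertexSet \ σ) := by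
  have hσD : #σ = D + 1 := hΔ.1.card_eq_of_isFacet hσ
  set deg := fun u => #(σ.filter (Δ.graph.Adj u))
  have hdeg : ∀ u ∈ Δ.vertexSet, deg u ≤ D := fun u hu =>
    Nat.lt_succ_iff.1 (hσD ▸ hflag.card_filter_adj_lt_of_isFacet hσ hu :)
  have hσW := subset_vertexSet_of_mem_faces hσ.1
  have hinside : ∑ u ∈ σ, deg u ≤ (D + 1) * D := by
    simpa [hσD] using sum_le_card_nsmul σ deg D fun u hu => hdeg u (hσW hu)
  have houtside : ∑ u ∈ Δ.vertexSet \ σ, deg u ≤ (D - 1) * #(Δ.vertexSet \ σ) + (D + 1) :=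
    calc ∑ u ∈ Δ.vertexSet \ σ, deg u
        ≤ ∑ u ∈ Δ.vertexSet \ σ, ((D - 1) + if deg u = D then 1 else 0) := by
          refine sum_le_sum fun u hu => ?_
          have := hdeg u (mem_sdiff.1 hu).1
          split_ifs <;> omega
      _ = (D - 1) * #(Δ.vertexSet \ σ) + #((Δ.vertexSet \ σ).filter fun u => deg u = D) := by
          rw [sum_add_distrib, sum_const, card_filter, smul_eq_mul, mul_comm]
      _ ≤ (D - 1) * #(Δ.vertexSet \ σ) + (D + 1) :=
          Nat.add_le_add_left (hΔ.card_filter_card_filter_adj_eq_le hflag hσ) _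
  rw [sum_card_vertexSet_link_singleton, ← sum_sdiff hσW]
  linarith

end SC

theorem statement_7_general {V : Type*} [DecidableEq V] (Δ : SC V) (n : ℕ)
    (hflag : Δ.IsFlag) (hpseudo : Δ.IsWeakPseudo 3) (hn : Δ.vertexSet.card = n)
    (σ : Finset V) (hσ : Δ.IsFacet σ) :
    ∑ v ∈ σ, (Δ.link {v}).vertexSet.card ≤ 2 * n + 8 := by
  have hσW : σ ⊆ Δ.vertexSet := SC.subset_vertexSet_of_mem_faces hσ.1
  have hσ4 : #σ = 4 := hpseudo.1.card_eq_of_isFacet hσ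
  have hbound := hpseudo.sum_card_vertexSet_link_singleton_le hflag hσ
  rw [card_sdiff_of_subset hσW, hn, hσ4] at hbound
  have := card_le_card hσW
  omega

/-- In a flag weak 3-pseudomanifold on `n` vertices, for any facet `σ`
the sum of the degrees of the four vertices of `σ` is at most `2n + 8`. -/
theorem statement_7 {V : Type*} [DecidableEq V] (Δ : SC V) (n : ℕ)
    (hflag : Δ.IsFlag) (hpseudo : Δ.IsWeakPseudo 3) (hn : Δ.vertexSet.card = n)
    (σ : Finset V) (hσ : Δ.IsFacet σ) (hcard : σ.card = 4) :
    ∑ v ∈ σ, (Δ.link {v}).vertexSet.card ≤ 2 * n + 8 :=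
  statement_7_general Δ n hflag hpseudo hn σ hσ
end

section
/- Let Δ be a flag 3-dimensional Eulerian simplicial complex on n vertices. Then the number of edges of Δ satisfies f_1(Δ) ≤ ⌊n²/4⌋ + n. -/
/-!
Write `N(w)` for the neighbours of a vertex `w`, `T(w)` for the vertices outside its closed
star, `n = f₀` and `e = f₁`. In an Eulerian complex Alexander duality relates the reduced Euler
characteristics of the restrictions to `T(w)` and to `{w} ∪ N(w)`; in a flag complex the latter
is a cone, so `χ̃(Δ[T(w)]) = 0`. Since every triangle of `Δ` lies in two tetrahedra, this forces
`Δ[T(w)]` to have at least `|T(w)| - 1 = n - 2 - deg w` edges. Counting the edges of `Δ` by their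
number of endpoints in `N(w)` and summing over `w` gives
`∑ deg² + ∑_w f₁(Δ[T(w)]) ≤ n e + 3 f₂`, hence `∑ deg² ≤ n e + 3 f₂ - n (n - 2) + 2 e`.
With Cauchy–Schwarz `(2e)² ≤ n ∑ deg²` and the Euler relations `e = n + f₂ - f₃`, `2 f₃ ≤ f₂`
this becomes `(4e - n² - 4n)(e - n) ≤ 0`, and `e - n ≥ f₃ > 0`.
-/

open Finset

lemma Finset.sum_card_filter_mem_eq_sum_card_inter {α : Type*} [DecidableEq α] (s : Finset α)
    (B : Finset (Finset α)) : ∑ a ∈ s, #{b ∈ B | a ∈ b} = ∑ b ∈ B, #(s ∩ b) := by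
  simp_rw [← filter_mem_eq_inter, card_eq_sum_ones, sum_filter]
  exact sum_comm

namespace SC

variable {V : Type*} [DecidableEq V]

section Basic

variable (Γ : SC V)

lemma mem_vertexSet_s8 {x : V} : x ∈ Γ.vertexSet ↔ {x} ∈ Γ.faces := by
  refine ⟨fun hx => ?_, fun hx => mem_sup.2 ⟨{x}, hx, mem_singleton_self x⟩⟩
  obtain ⟨σ, hσ, hxσ⟩ := mem_sup.1 hx
  exact Γ.down_closed hσ (singleton_subset_iff.2 hxσ)

variable {Γ}

lemma subset_vertexSet {σ : Finset V} (hσ : σ ∈ Γ.faces) : σ ⊆ Γ.vertexSet :=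
  fun _ hx => mem_sup.2 ⟨σ, hσ, hx⟩

lemma vertexSet_restrict {W : Finset V} (hW : W ⊆ Γ.vertexSet) :
    (Γ.restrict W).vertexSet = W := by
  ext x
  simp only [mem_vertexSet_s8, restrict, mem_filter, singleton_subset_iff]
  exact ⟨And.right, fun hx => ⟨(Γ.mem_vertexSet_s8).1 (hW hx), hx⟩⟩

variable (Γ)

lemma fNum_zero : Γ.fNum 0 = #Γ.vertexSet := by
  symm
  refine card_bij (fun x _ => {x}) (fun x hx => ?_) (fun _ _ _ _ => singleton_inj.1) ?_
  · exact mem_filter.2 ⟨(Γ.mem_vertexSet_s8).1 hx, card_singleton x⟩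
  · intro σ hσ
    obtain ⟨hσΓ, hσ1⟩ := mem_filter.1 hσ
    obtain ⟨x, rfl⟩ := card_eq_one.1 hσ1
    exact ⟨x, (Γ.mem_vertexSet_s8).2 hσΓ, rfl⟩

lemma redChar_eq_sum_fNum {D : ℕ} (hdim : ∀ σ ∈ Γ.faces, σ.card ≤ D + 1) :
    Γ.redChar = -1 + ∑ i ∈ range (D + 1), (-1) ^ i * (Γ.fNum i : ℤ) := by
  have hfiber : ∑ σ ∈ Γ.faces, (-1 : ℤ) ^ σ.card
      = ∑ k ∈ range (D + 2), (-1) ^ k * (#{σ ∈ Γ.faces | σ.card = k} : ℤ) := by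
    rw [← sum_fiberwise_of_maps_to (g := card) (t := range (D + 2))
      fun σ hσ => mem_range.2 (Nat.lt_succ_of_le (hdim σ hσ))]
    refine sum_congr rfl fun k _ => ?_
    rw [sum_congr rfl fun σ hσ => by rw [(mem_filter.1 hσ).2], sum_const, nsmul_eq_mul,
      mul_comm]
  have hempty : {σ ∈ Γ.faces | σ.card = 0} = {∅} := by
    ext σ
    simp only [mem_filter, card_eq_zero, mem_singleton]
    exact ⟨And.right, fun h => ⟨h ▸ Γ.empty_mem, h⟩⟩
  rw [redChar, hfiber, sum_range_succ', hempty, card_singleton]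
  simp only [fNum, pow_succ, mul_neg_one, neg_mul, sum_neg_distrib]
  ring

lemma mul_fNum_succ_le {k m : ℕ}
    (h : ∀ ρ ∈ Γ.faces, ρ.card = k + 1 → #{τ ∈ Γ.faces | ρ ⊆ τ ∧ τ.card = k + 2} ≤ m) :
    (k + 2) * Γ.fNum (k + 1) ≤ m * Γ.fNum k := by
  rw [mul_comm, mul_comm m]
  refine card_mul_le_card_mul (fun σ ρ => ρ ⊆ σ) (fun σ hσ => ?_) (fun ρ hρ => ?_)
  · obtain ⟨hσΓ, hσ⟩ := mem_filter.1 hσ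
    have hsub : σ.powersetCard (k + 1)
        ⊆ bipartiteAbove (fun σ ρ => ρ ⊆ σ) {ρ ∈ Γ.faces | ρ.card = k + 1} σ := fun ρ hρ => by
      obtain ⟨hρσ, hρ⟩ := mem_powersetCard.1 hρ
      exact mem_filter.2 ⟨mem_filter.2 ⟨Γ.down_closed hσΓ hρσ, hρ⟩, hρσ⟩
    refine le_trans ?_ (card_le_card hsub)
    rw [card_powersetCard, hσ, Nat.choose_succ_self_right]
  · obtain ⟨hρΓ, hρ⟩ := mem_filter.1 hρ
    refine le_trans (le_of_eq ?_) (h ρ hρΓ hρ)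
    simp only [bipartiteBelow, filter_filter]
    congr 1
    ext τ
    simp only [mem_filter]
    tauto

lemma redChar_eq_of_card_le_four (hdim : ∀ σ ∈ Γ.faces, σ.card ≤ 4) :
    Γ.redChar = -1 + Γ.fNum 0 - Γ.fNum 1 + Γ.fNum 2 - Γ.fNum 3 := by
  rw [Γ.redChar_eq_sum_fNum (D := 3) hdim]
  simp only [sum_range_succ, sum_range_zero]
  ring

lemma two_mul_fNum_three_le
    (h : ∀ ρ ∈ Γ.faces, ρ.card = 3 → #{τ ∈ Γ.faces | ρ ⊆ τ ∧ τ.card = 4} ≤ 2) :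
    2 * Γ.fNum 3 ≤ Γ.fNum 2 := by
  have := Γ.mul_fNum_succ_le (k := 2) h
  norm_num at this
  omega

variable {Γ}

lemma fNum_one_restrict (W : Finset V) :
    (Γ.restrict W).fNum 1 = ∑ σ ∈ Γ.faces with σ.card = 2, if σ ⊆ W then 1 else 0 := by
  rw [← card_filter, fNum, restrict, filter_filter, filter_filter]
  simp_rw [and_comm]

lemma redChar_restrict_eq_zero_of_cone {W : Finset V} {w : V} (hw : w ∈ W)
    (hcone : ∀ σ ∈ Γ.faces, σ ⊆ W → insert w σ ∈ Γ.faces) : (Γ.restrict W).redChar = 0 := by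
  rw [redChar, neg_eq_zero]
  refine sum_involution (fun σ _ => if w ∈ σ then σ.erase w else insert w σ)
    (fun σ _ => ?_) (fun σ _ _ => ?_) (fun σ hσ => ?_) (fun σ _ => ?_)
  · split_ifs with h
    · rw [← card_erase_add_one h, pow_succ]; ring
    · rw [card_insert_of_notMem h, pow_succ]; ring
  · by_cases h : w ∈ σ <;> simp [h]
  · obtain ⟨hσΓ, hσW⟩ := mem_filter.1 hσ
    split_ifs
    · exact mem_filter.2 ⟨Γ.down_closed hσΓ (erase_subset w σ), (erase_subset w σ).trans hσW⟩
    · exact mem_filter.2 ⟨hcone σ hσΓ hσW, insert_subset hw hσW⟩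
  · by_cases h : w ∈ σ <;> simp [h]

end Basic

section Eulerian

variable {Δ : SC V} {D : ℕ}

lemma sum_supersets_eq_mul_sum_link {ρ : Finset V} (hρ : ρ ∈ Δ.faces) :
    ∑ σ ∈ Δ.faces with ρ ⊆ σ, (-1 : ℤ) ^ σ.card
      = (-1) ^ ρ.card * ∑ τ ∈ (Δ.link ρ).faces, (-1 : ℤ) ^ τ.card := by
  have hlink : (Δ.link ρ).faces = {τ ∈ Δ.faces | Disjoint τ ρ ∧ τ ∪ ρ ∈ Δ.faces} :=
    insert_eq_self.2 (mem_filter.2 ⟨Δ.empty_mem, disjoint_empty_left ρ, by rwa [empty_union]⟩)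
  rw [hlink, mul_sum]
  refine sum_nbij' (· \ ρ) (· ∪ ρ) (fun σ hσ => ?_) (fun τ hτ => ?_) (fun σ hσ => ?_)
    (fun τ hτ => ?_) (fun σ hσ => ?_)
  all_goals simp only [mem_filter] at *
  · rw [sdiff_union_of_subset hσ.2]
    exact ⟨Δ.down_closed hσ.1 sdiff_subset, sdiff_disjoint, hσ.1⟩
  · exact ⟨hτ.2.2, subset_union_right⟩
  · exact sdiff_union_of_subset hσ.2
  · exact union_sdiff_cancel_right hτ.2.1
  · rw [← pow_add, card_sdiff_add_card_eq_card hσ.2 |>.symm.trans (add_comm _ _)]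

lemma IsEulerian.sum_supersets (heul : Δ.IsEulerian D) {ρ : Finset V} (hρ : ρ ∈ Δ.faces) :
    ∑ σ ∈ Δ.faces with ρ ⊆ σ, (-1 : ℤ) ^ σ.card = -(-1) ^ D := by
  rw [sum_supersets_eq_mul_sum_link hρ, ← heul.2 ρ hρ, redChar]
  ring

lemma IsEulerian.redChar_eq (heul : Δ.IsEulerian D) : Δ.redChar = (-1) ^ D := by
  have h := heul.sum_supersets Δ.empty_mem
  rw [filter_true_of_mem fun σ _ => empty_subset σ] at h
  rw [redChar, h, neg_neg]

theorem IsEulerian.isWeakPseudo (heul : Δ.IsEulerian D) : Δ.IsWeakPseudo D := by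
  refine ⟨heul.1, fun ρ hρ hcard => ?_⟩
  set F := {τ ∈ Δ.faces | ρ ⊆ τ ∧ τ.card = D + 1}
  have hsplit : {σ ∈ Δ.faces | ρ ⊆ σ} = insert ρ F := by
    ext σ
    simp only [F, mem_filter, mem_insert]
    constructor
    · rintro ⟨hσ, hρσ⟩
      rcases (card_le_card hρσ).lt_or_eq with hlt | heq
      · exact Or.inr ⟨hσ, hρσ, le_antisymm (heul.1.1 σ hσ) (by omega)⟩
      · exact Or.inl (eq_of_subset_of_card_le hρσ heq.ge).symm
    · rintro (rfl | ⟨hσ, hρσ, -⟩)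
      exacts [⟨hρ, Subset.rfl⟩, ⟨hσ, hρσ⟩]
  have hρF : ρ ∉ F := fun h => by simp [F, hcard] at h
  have hF : ∑ σ ∈ F, (-1 : ℤ) ^ σ.card = #F * (-1) ^ (D + 1) := by
    rw [sum_congr rfl fun σ hσ => by rw [(mem_filter.1 hσ).2.2], sum_const, nsmul_eq_mul]
  have h := heul.sum_supersets hρ
  rw [hsplit, sum_insert hρF, hF, hcard, pow_succ] at h
  have : ((#F : ℤ) - 2) * (-1) ^ D = 0 := by linear_combination -h
  exact_mod_cast sub_eq_zero.1 ((mul_eq_zero.1 this).resolve_right (by simp))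

theorem IsEulerian.redChar_restrict_sdiff (heul : Δ.IsEulerian D) (A : Finset V) :
    (Δ.restrict (Δ.vertexSet \ A)).redChar = -(-1) ^ D * (Δ.restrict A).redChar := by
  have hcompl : ∀ σ ∈ Δ.faces, σ ⊆ Δ.vertexSet \ A ↔ σ ∩ A = ∅ := fun σ hσ => by
    rw [subset_sdiff, ← disjoint_iff_inter_eq_empty]
    exact and_iff_right (subset_vertexSet hσ)
  suffices ∑ σ ∈ Δ.faces with σ ⊆ Δ.vertexSet \ A, (-1 : ℤ) ^ σ.card
      = -(-1) ^ D * ∑ ρ ∈ Δ.faces with ρ ⊆ A, (-1 : ℤ) ^ ρ.card by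
    simp only [redChar, restrict, this]
    ring
  calc ∑ σ ∈ Δ.faces with σ ⊆ Δ.vertexSet \ A, (-1 : ℤ) ^ σ.card
      = ∑ σ ∈ Δ.faces, ∑ ρ ∈ (σ ∩ A).powerset, (-1 : ℤ) ^ ρ.card * (-1) ^ σ.card := by
        rw [sum_filter]
        refine sum_congr rfl fun σ hσ => ?_
        rw [← sum_mul, sum_powerset_neg_one_pow_card]
        by_cases h : σ ∩ A = ∅ <;> simp [h, hcompl σ hσ]
    _ = ∑ ρ ∈ Δ.faces with ρ ⊆ A, ∑ σ ∈ Δ.faces with ρ ⊆ σ, (-1 : ℤ) ^ ρ.card * (-1) ^ σ.card := by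
        refine sum_comm' fun σ ρ => ?_
        simp only [mem_filter, mem_powerset, subset_inter_iff]
        exact ⟨fun ⟨hσ, hρσ, hρA⟩ => ⟨⟨hσ, hρσ⟩, Δ.down_closed hσ hρσ, hρA⟩,
          fun ⟨⟨hσ, hρσ⟩, _, hρA⟩ => ⟨hσ, hρσ, hρA⟩⟩
    _ = -(-1) ^ D * ∑ ρ ∈ Δ.faces with ρ ⊆ A, (-1 : ℤ) ^ ρ.card := by
        rw [mul_sum]
        refine sum_congr rfl fun ρ hρ => ?_
        rw [← mul_sum, heul.sum_supersets (mem_filter.1 hρ).1, mul_comm]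

lemma IsWeakPseudo.card_supersets_restrict_le (hΔ : Δ.IsWeakPseudo D)
    (W : Finset V) {ρ : Finset V} (hρ : ρ ∈ (Δ.restrict W).faces) (hcard : ρ.card = D) :
    #{τ ∈ (Δ.restrict W).faces | ρ ⊆ τ ∧ τ.card = D + 1} ≤ 2 :=
  (hΔ.2 ρ (mem_filter.1 hρ).1 hcard).symm ▸
    card_le_card (filter_subset_filter _ (filter_subset _ _))

end Eulerian

def nbrs (Δ : SC V) (w : V) : Finset V := {x ∈ Δ.vertexSet | x ≠ w ∧ {w, x} ∈ Δ.faces}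

def nonNbrs (Δ : SC V) (w : V) : Finset V := Δ.vertexSet \ insert w (Δ.nbrs w)

section Neighbours

variable {Δ : SC V} {w x : V} {σ : Finset V}

lemma mem_nbrs : x ∈ Δ.nbrs w ↔ x ≠ w ∧ {w, x} ∈ Δ.faces :=
  ⟨fun h => (mem_filter.1 h).2, fun h => mem_filter.2
    ⟨subset_vertexSet h.2 (mem_insert_of_mem (mem_singleton_self x)), h⟩⟩

lemma mem_nbrs_comm : x ∈ Δ.nbrs w ↔ w ∈ Δ.nbrs x := by
  rw [mem_nbrs, mem_nbrs, pair_comm, ne_comm]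

lemma mem_nonNbrs : x ∈ Δ.nonNbrs w ↔ x ∈ Δ.vertexSet ∧ x ≠ w ∧ x ∉ Δ.nbrs w := by
  simp [nonNbrs]

lemma card_nbrs_inter_add_ite_nonNbrs (hσ : σ ∈ Δ.faces) (hσ2 : σ.card = 2) :
    #(Δ.nbrs w ∩ σ) + (if σ ⊆ Δ.nonNbrs w then 1 else 0) = 1 + (if σ ⊆ Δ.nbrs w then 1 else 0) := by
  obtain ⟨u, v, huv, rfl⟩ := card_eq_two.1 hσ2
  have hu := subset_vertexSet hσ (mem_insert_self u {v})
  have hv := subset_vertexSet hσ (mem_insert_of_mem (mem_singleton_self v))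
  have hwu : w = u → v ∈ Δ.nbrs w := fun h => mem_nbrs.2 ⟨by grind, h ▸ hσ⟩
  have hwv : w = v → u ∈ Δ.nbrs w := fun h => mem_nbrs.2 ⟨by grind, h ▸ pair_comm u v ▸ hσ⟩
  have hwN : w ∉ Δ.nbrs w := fun h => (mem_nbrs.1 h).1 rfl
  simp only [insert_subset_iff, singleton_subset_iff, mem_nonNbrs]
  rw [inter_comm, ← filter_mem_eq_inter, card_filter, sum_pair huv]
  grind

variable (Δ) in
lemma card_nbrs (w : V) : #(Δ.nbrs w) = #{σ ∈ Δ.faces | σ.card = 2 ∧ w ∈ σ} := by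
  refine card_bij (fun x _ => {w, x}) (fun x hx => ?_) (fun x hx y hy h => ?_) (fun σ hσ => ?_)
  · obtain ⟨hxw, hwx⟩ := mem_nbrs.1 hx
    exact mem_filter.2 ⟨hwx, card_pair hxw.symm, mem_insert_self w {x}⟩
  · have hxw := (mem_nbrs.1 hx).1
    have hyw := (mem_nbrs.1 hy).1
    simpa [erase_insert_eq_erase, hxw.symm, hyw.symm] using congrArg (·.erase w) h
  · obtain ⟨hσΔ, hσ2, hwσ⟩ := mem_filter.1 hσ
    obtain ⟨x, hx⟩ := card_eq_one.1 (by rw [card_erase_of_mem hwσ, hσ2] : #(σ.erase w) = 1)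
    have hxw : x ≠ w := ne_of_mem_erase (hx ▸ mem_singleton_self x)
    have hwx : {w, x} = σ := by rw [← hx, insert_erase hwσ]
    exact ⟨x, mem_nbrs.2 ⟨hxw, hwx ▸ hσΔ⟩, hwx⟩

variable (Δ) in
lemma sum_card_filter_mem (k : ℕ) :
    ∑ w ∈ Δ.vertexSet, #{σ ∈ Δ.faces | σ.card = k + 1 ∧ w ∈ σ} = (k + 1) * Δ.fNum k := by
  simp_rw [← filter_filter, sum_card_filter_mem_eq_sum_card_inter, fNum]
  rw [sum_congr rfl fun σ hσ => by
    rw [inter_eq_right.2 (subset_vertexSet (mem_filter.1 hσ).1), (mem_filter.1 hσ).2],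
    sum_const, smul_eq_mul, mul_comm]

variable (Δ) in
lemma sum_card_nbrs : ∑ w ∈ Δ.vertexSet, #(Δ.nbrs w) = 2 * Δ.fNum 1 := by
  simp_rw [card_nbrs]
  exact Δ.sum_card_filter_mem 1

variable (Δ) in
lemma sum_sum_card_nbrs :
    ∑ w ∈ Δ.vertexSet, ∑ x ∈ Δ.nbrs w, #(Δ.nbrs x) = ∑ x ∈ Δ.vertexSet, #(Δ.nbrs x) ^ 2 := by
  rw [sum_comm' (t' := Δ.vertexSet) (s' := Δ.nbrs) fun w x => ?_]
  · simp [sq]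
  · rw [mem_nbrs_comm]
    exact ⟨fun ⟨_, h⟩ => ⟨h, mem_filter.1 (mem_nbrs_comm.1 h) |>.1⟩,
      fun ⟨h, _⟩ => ⟨(mem_filter.1 h).1, h⟩⟩

lemma card_nonNbrs_add (hw : w ∈ Δ.vertexSet) :
    #(Δ.nonNbrs w) + #(Δ.nbrs w) + 1 = #Δ.vertexSet := by
  have hsub : insert w (Δ.nbrs w) ⊆ Δ.vertexSet := insert_subset hw (filter_subset _ _)
  have hcard := card_sdiff_add_card_eq_card hsub
  rw [card_insert_of_notMem fun h => (mem_nbrs.1 h).1 rfl] at hcard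
  rw [nonNbrs, ← hcard, add_assoc]

lemma sum_card_nbrs_add_fNum_restrict_nonNbrs :
    ∑ x ∈ Δ.nbrs w, #(Δ.nbrs x) + (Δ.restrict (Δ.nonNbrs w)).fNum 1
      = Δ.fNum 1 + (Δ.restrict (Δ.nbrs w)).fNum 1 := by
  calc ∑ x ∈ Δ.nbrs w, #(Δ.nbrs x) + (Δ.restrict (Δ.nonNbrs w)).fNum 1
      = ∑ σ ∈ Δ.faces with σ.card = 2,
          (#(Δ.nbrs w ∩ σ) + if σ ⊆ Δ.nonNbrs w then 1 else 0) := by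
        simp_rw [card_nbrs, ← filter_filter, sum_card_filter_mem_eq_sum_card_inter,
          fNum_one_restrict, sum_add_distrib]
    _ = ∑ σ ∈ Δ.faces with σ.card = 2, (1 + if σ ⊆ Δ.nbrs w then 1 else 0) :=
        sum_congr rfl fun σ hσ =>
          card_nbrs_inter_add_ite_nonNbrs (mem_filter.1 hσ).1 (mem_filter.1 hσ).2
    _ = Δ.fNum 1 + (Δ.restrict (Δ.nbrs w)).fNum 1 := by
        rw [sum_add_distrib, fNum_one_restrict, sum_const, smul_eq_mul, mul_one]
        rfl

end Neighbours

section Flag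

variable {Δ : SC V} {w : V}

lemma IsFlag.insert_mem (hflag : Δ.IsFlag) (hw : w ∈ Δ.vertexSet) {σ : Finset V}
    (hσ : σ ∈ Δ.faces) (hσw : σ ⊆ Δ.nbrs w) : insert w σ ∈ Δ.faces := by
  have hpair : ∀ x ∈ σ, {w, x} ∈ Δ.faces := fun x hx => (mem_nbrs.1 (hσw hx)).2
  refine hflag _ fun a ha b hb => ?_
  rcases mem_insert.1 ha with rfl | haσ
  · rcases mem_insert.1 hb with rfl | hbσ
    · simpa using (Δ.mem_vertexSet_s8).1 hw
    · exact hpair b hbσ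
  · rcases mem_insert.1 hb with rfl | hbσ
    · rw [pair_comm]
      exact hpair a haσ
    · exact Δ.down_closed hσ (insert_subset haσ (singleton_subset_iff.2 hbσ))

lemma IsFlag.redChar_restrict_nonNbrs (hflag : Δ.IsFlag) {D : ℕ} (heul : Δ.IsEulerian D)
    (hw : w ∈ Δ.vertexSet) : (Δ.restrict (Δ.nonNbrs w)).redChar = 0 := by
  rw [nonNbrs, heul.redChar_restrict_sdiff, mul_eq_zero]
  refine Or.inr (redChar_restrict_eq_zero_of_cone (mem_insert_self w _) fun σ hσ hσW => ?_)
  by_cases hwσ : w ∈ σ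
  · rwa [insert_eq_of_mem hwσ]
  · exact hflag.insert_mem hw hσ ((subset_insert_iff_of_notMem hwσ).1 hσW)

lemma IsFlag.card_nonNbrs_le (hflag : Δ.IsFlag) (heul : Δ.IsEulerian 3) (hw : w ∈ Δ.vertexSet) :
    #(Δ.nonNbrs w) ≤ (Δ.restrict (Δ.nonNbrs w)).fNum 1 + 1 := by
  have hχ := (Δ.restrict (Δ.nonNbrs w)).redChar_eq_of_card_le_four fun σ hσ =>
    heul.1.1 σ (mem_filter.1 hσ).1
  rw [hflag.redChar_restrict_nonNbrs heul hw, fNum_zero,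
    vertexSet_restrict (W := Δ.nonNbrs w) sdiff_subset] at hχ
  have h23 := (Δ.restrict (Δ.nonNbrs w)).two_mul_fNum_three_le fun ρ hρ =>
    heul.isWeakPseudo.card_supersets_restrict_le _ hρ
  omega

lemma IsFlag.fNum_one_restrict_nbrs_le (hflag : Δ.IsFlag) (hw : w ∈ Δ.vertexSet) :
    (Δ.restrict (Δ.nbrs w)).fNum 1 ≤ #{σ ∈ Δ.faces | σ.card = 3 ∧ w ∈ σ} := by
  have hwσ : ∀ σ ∈ (Δ.restrict (Δ.nbrs w)).faces, w ∉ σ := fun σ hσ hw' =>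
    (mem_nbrs.1 ((mem_filter.1 hσ).2 hw')).1 rfl
  refine card_le_card_of_injOn (insert w) (fun σ hσ => ?_) (fun σ hσ τ hτ h => ?_)
  · obtain ⟨hσr, hσ2⟩ := mem_filter.1 (mem_coe.1 hσ)
    obtain ⟨hσΔ, hσN⟩ := mem_filter.1 hσr
    refine mem_filter.2 ⟨hflag.insert_mem hw hσΔ hσN, ?_, mem_insert_self w σ⟩
    rw [card_insert_of_notMem (hwσ σ hσr), hσ2]
  · have h' := congrArg (·.erase w) h
    simpa [erase_insert (hwσ σ (mem_filter.1 (mem_coe.1 hσ)).1),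
      erase_insert (hwσ τ (mem_filter.1 (mem_coe.1 hτ)).1)] using h'

lemma IsFlag.sum_sq_card_nbrs_add_le (hflag : Δ.IsFlag) :
    ∑ w ∈ Δ.vertexSet, #(Δ.nbrs w) ^ 2 + ∑ w ∈ Δ.vertexSet, (Δ.restrict (Δ.nonNbrs w)).fNum 1
      ≤ #Δ.vertexSet * Δ.fNum 1 + 3 * Δ.fNum 2 := by
  calc ∑ w ∈ Δ.vertexSet, #(Δ.nbrs w) ^ 2
        + ∑ w ∈ Δ.vertexSet, (Δ.restrict (Δ.nonNbrs w)).fNum 1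
      = ∑ w ∈ Δ.vertexSet,
          (∑ x ∈ Δ.nbrs w, #(Δ.nbrs x) + (Δ.restrict (Δ.nonNbrs w)).fNum 1) := by
        rw [← sum_sum_card_nbrs, sum_add_distrib]
    _ ≤ ∑ w ∈ Δ.vertexSet, (Δ.fNum 1 + #{σ ∈ Δ.faces | σ.card = 2 + 1 ∧ w ∈ σ}) :=
        sum_le_sum fun w hw => by
          rw [sum_card_nbrs_add_fNum_restrict_nonNbrs]
          exact Nat.add_le_add_left (hflag.fNum_one_restrict_nbrs_le hw) _
    _ = #Δ.vertexSet * Δ.fNum 1 + 3 * Δ.fNum 2 := by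
        rw [sum_add_distrib, sum_const, smul_eq_mul, Δ.sum_card_filter_mem 2]

lemma IsFlag.four_mul_sq_fNum_one_le (hflag : Δ.IsFlag) (heul : Δ.IsEulerian 3) :
    4 * (Δ.fNum 1 : ℤ) ^ 2 ≤ #Δ.vertexSet * (#Δ.vertexSet * Δ.fNum 1 + 3 * Δ.fNum 2
      - #Δ.vertexSet * (#Δ.vertexSet - 2) + 2 * Δ.fNum 1) := by
  have hdeg : ∑ w ∈ Δ.vertexSet, (#(Δ.nbrs w) : ℤ) = 2 * Δ.fNum 1 := by
    exact_mod_cast Δ.sum_card_nbrs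
  have hnon : ∑ w ∈ Δ.vertexSet, ((#Δ.vertexSet : ℤ) - 2 - #(Δ.nbrs w))
      ≤ ∑ w ∈ Δ.vertexSet, ((Δ.restrict (Δ.nonNbrs w)).fNum 1 : ℤ) :=
    sum_le_sum fun w hw => by
      have := hflag.card_nonNbrs_le heul hw
      have := card_nonNbrs_add hw
      omega
  have hsq : ∑ w ∈ Δ.vertexSet, (#(Δ.nbrs w) : ℤ) ^ 2
      + ∑ w ∈ Δ.vertexSet, ((Δ.restrict (Δ.nonNbrs w)).fNum 1 : ℤ)
      ≤ #Δ.vertexSet * Δ.fNum 1 + 3 * Δ.fNum 2 := by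
    exact_mod_cast hflag.sum_sq_card_nbrs_add_le
  have hCS := sq_sum_le_card_mul_sum_sq (s := Δ.vertexSet) (f := fun w => (#(Δ.nbrs w) : ℤ))
  rw [sum_sub_distrib, sum_sub_distrib, sum_const, sum_const, hdeg] at hnon
  rw [hdeg] at hCS
  simp only [nsmul_eq_mul] at hnon
  nlinarith [Int.natCast_nonneg #Δ.vertexSet]

end Flag

end SC

/-- A flag 3-dimensional Eulerian complex on `n` vertices has at most
`⌊n²/4⌋ + n` edges. -/
theorem statement_8 {V : Type*} [DecidableEq V] (Δ : SC V) (n : ℕ)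
    (hflag : Δ.IsFlag) (heul : Δ.IsEulerian 3) (hn : Δ.vertexSet.card = n) :
    Δ.fNum 1 ≤ n ^ 2 / 4 + n := by
  subst hn
  have hχ := heul.redChar_eq
  rw [Δ.redChar_eq_of_card_le_four heul.1.1, Δ.fNum_zero] at hχ
  have h23 := Δ.two_mul_fNum_three_le fun ρ hρ hρ3 => (heul.isWeakPseudo.2 ρ hρ hρ3).le
  obtain ⟨σ, hσ, hσ4⟩ := heul.1.2.1
  have hf3 : 0 < Δ.fNum 3 := card_pos.2 ⟨σ, mem_filter.2 ⟨hσ, hσ4⟩⟩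
  have hsq := hflag.four_mul_sq_fNum_one_le heul
  suffices 4 * Δ.fNum 1 ≤ #Δ.vertexSet ^ 2 + 4 * #Δ.vertexSet by omega
  zify at h23 hf3 ⊢
  set e : ℤ := (Δ.fNum 1 : ℤ)
  set n : ℤ := (#Δ.vertexSet : ℤ)
  have hn : 0 ≤ n := Int.natCast_nonneg _
  have he : 1 ≤ e - n := by linarith
  have hf2 : 3 * (Δ.fNum 2 : ℤ) ≤ 6 * (e - n) := by linarith
  have : (4 * e - n ^ 2 - 4 * n) * (e - n) ≤ 0 := by
    nlinarith [mul_le_mul_of_nonneg_left hf2 hn]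
  nlinarith
end
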